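/- Let U : [0,∞) → ℝ be continuous with lim_{ξ→∞} U(ξ)/log ξ = +∞, let σ > 0, α ∈ ℝ, p > 1, and let G : [0,∞) → ℝ be continuous with G(0) = 0. Then the function t ↦ ((2/(p-1)) - α)·log t - max_{[0,t]} G + (1/p)·min_{[σt,(2+σ)t]} U - max_{[σt,(2+σ)t]} U is bounded above on (1,∞); in particular it does not tend to +∞. -/

import Mathlib

open Filter Set Real

/-!
Superlogarithmic growth gives `U ξ ≥ M log ξ - K` on `[σ, ∞)` for every slope `M`, continuity
handling the compact part `[σ, a]`. Since `max U ≥ min U` and `max G ≥ G 0 = 0`, the expression is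
at most `C log t - (1 - 1/p) min U` with `C = 2/(p-1) - α`, and the slope `M = |C| p / (p - 1)`
makes the logarithmic lower bound on `min U` absorb `C log t`.
-/

theorem exists_mul_log_sub_le_of_tendsto_div_log {U : ℝ → ℝ} {σ : ℝ} (hσ : 0 < σ)
    (hU : ContinuousOn U (Ici σ)) (hlim : Tendsto (fun ξ => U ξ / log ξ) atTop atTop) (M : ℝ) :
    ∃ K, ∀ ξ ≥ σ, M * log ξ - K ≤ U ξ := by
  obtain ⟨a, ha⟩ := eventually_atTop.mp (hlim.eventually_ge_atTop M)
  set b := max a 2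
  have hcont : ContinuousOn (fun ξ => M * log ξ - U ξ) (Icc σ b) :=
    ((continuousOn_log.mono fun ξ hξ => (hσ.trans_le hξ.1).ne').const_smul M).sub
      (hU.mono Icc_subset_Ici_self)
  obtain ⟨K, hK⟩ := isCompact_Icc.bddAbove_image hcont
  refine ⟨max K 0, fun ξ hξ => ?_⟩
  rcases le_total ξ b with hξb | hbξ
  · have := hK ⟨ξ, ⟨hξ, hξb⟩, rfl⟩
    dsimp only at this
    linarith [le_max_left K 0]
  · have hlog : 0 < log ξ := log_pos (by linarith [le_max_right a 2])
    have := ha ξ ((le_max_left a 2).trans hbξ)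
    rw [le_div_iff₀ hlog] at this
    linarith [le_max_right K 0]

theorem mul_csInf_sub_csSup_le {s : Set ℝ} (hs : IsCompact s) (hne : s.Nonempty) {c L : ℝ}
    (hc : c ≤ 1) (hL : ∀ y ∈ s, L ≤ y) : c * sInf s - sSup s ≤ (c - 1) * L := by
  have hLm : L ≤ sInf s := le_csInf hne hL
  have hmS : sInf s ≤ sSup s := csInf_le_csSup hne hs.bddBelow hs.bddAbove
  nlinarith

theorem stmt_8 (U : ℝ → ℝ) (hU : ContinuousOn U (Ici 0))
    (hlim : Tendsto (fun ξ => U ξ / Real.log ξ) atTop atTop)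
    (G : ℝ → ℝ) (hG : ContinuousOn G (Ici 0)) (hG0 : G 0 = 0)
    (σ α p : ℝ) (hσ : 0 < σ) (hp : 1 < p) :
    ∃ B : ℝ, ∀ t > 1,
      (2 / (p - 1) - α) * Real.log t
        - sSup (G '' Icc 0 t)
        + (1 / p) * sInf (U '' Icc (σ * t) ((2 + σ) * t))
        - sSup (U '' Icc (σ * t) ((2 + σ) * t)) ≤ B := by
  set C := 2 / (p - 1) - α
  set M := |C| * p / (p - 1)
  have hM : 0 ≤ M := div_nonneg (mul_nonneg (abs_nonneg C) (by linarith)) (by linarith)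
  have hslope : (1 / p - 1) * M = -|C| := by
    simp only [M]
    field_simp [show p - 1 ≠ 0 by linarith]
    ring
  obtain ⟨K, hK⟩ := exists_mul_log_sub_le_of_tendsto_div_log hσ
    (hU.mono (Ici_subset_Ici.2 hσ.le)) hlim M
  refine ⟨(1 / p - 1) * (M * log σ - K), fun t ht => ?_⟩
  have hσt : 0 < σ * t := by positivity
  have hGmax : 0 ≤ sSup (G '' Icc 0 t) :=
    le_csSup ((isCompact_Icc.image_of_continuousOn (hG.mono Icc_subset_Ici_self)).bddAbove)
      ⟨0, left_mem_Icc.2 (by linarith), hG0⟩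
  have hUmin : ∀ y ∈ U '' Icc (σ * t) ((2 + σ) * t), M * log (σ * t) - K ≤ y := by
    rintro _ ⟨ξ, hξ, rfl⟩
    have := hK ξ (by nlinarith [hξ.1])
    have := log_le_log hσt hξ.1
    nlinarith
  have hUpart := mul_csInf_sub_csSup_le
    (isCompact_Icc.image_of_continuousOn (hU.mono fun ξ hξ => hσt.le.trans hξ.1))
    ((nonempty_Icc.2 (by nlinarith)).image U) ((div_le_one (by linarith)).2 hp.le) hUmin
  have hCt : C * log t ≤ |C| * log t :=
    mul_le_mul_of_nonneg_right (le_abs_self C) (log_pos ht).le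
  have hsplit : (1 / p - 1) * (M * log (σ * t) - K)
      = (1 / p - 1) * (M * log σ - K) - |C| * log t := by
    rw [log_mul hσ.ne' (by positivity)]
    linear_combination log t * hslope
  linarith
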